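/- Let A and H be Lie bialgebras and ω : H ⊗ A → k a skew-pairing, i.e. ω([h,g], a) = ω(h, a₁)ω(g, a₂) and ω(h, [a,b]) = ω(h₁, b)ω(h₂, a) for all h, g ∈ H, a, b ∈ A. Then the bilinear map ▷ : H × A → A defined by h ▷ a := ω(h, a₂) a₁ makes A a left H-module, i.e. [h,g] ▷ a = h ▷ (g ▷ a) − g ▷ (h ▷ a) for all h, g ∈ H and a ∈ A. -/

import Mathlib

open TensorProduct

noncomputable section

variable {k : Type*} [Field k]
variable {A H : Type*} [AddCommGroup A] [Module k A] [AddCommGroup H] [Module k H]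

/-- The cyclic rotation `ξ : u ⊗ v ⊗ w ↦ v ⊗ w ⊗ u` on `(L ⊗ L) ⊗ L`. -/
def ξmap (k L : Type*) [Field k] [AddCommGroup L] [Module k L] :
    ((L ⊗[k] L) ⊗[k] L) →ₗ[k] ((L ⊗[k] L) ⊗[k] L) :=
  (TensorProduct.comm k L (L ⊗[k] L)).toLinearMap ∘ₗ (TensorProduct.assoc k L L L).toLinearMap

/-- Swap the last two tensor factors: `(m ⊗ n) ⊗ p ↦ (m ⊗ p) ⊗ n`. -/
def swapR (k M N P : Type*) [Field k] [AddCommGroup M] [Module k M] [AddCommGroup N]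
    [Module k N] [AddCommGroup P] [Module k P] :
    ((M ⊗[k] N) ⊗[k] P) →ₗ[k] ((M ⊗[k] P) ⊗[k] N) :=
  (TensorProduct.assoc k M P N).symm.toLinearMap
    ∘ₗ TensorProduct.map LinearMap.id (TensorProduct.comm k N P).toLinearMap
    ∘ₗ (TensorProduct.assoc k M N P).toLinearMap

/-- A bilinear bracket is a Lie algebra structure: antisymmetry and the Jacobi identity. -/
def IsLieAlg {L : Type*} [AddCommGroup L] [Module k L] (br : L →ₗ[k] L →ₗ[k] L) : Prop :=
  (∀ x y, br x y = - br y x) ∧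
  (∀ x y z, br (br x y) z + br (br y z) x + br (br z x) y = 0)

/-- A cobracket is a Lie coalgebra structure: coanticommutativity `τ ∘ δ = −δ` and the
co-Jacobi identity `(id + ξ + ξ²) ∘ (δ ⊗ id) ∘ δ = 0`. -/
def IsLieCoalg {L : Type*} [AddCommGroup L] [Module k L] (δ : L →ₗ[k] L ⊗[k] L) : Prop :=
  (∀ x, TensorProduct.comm k L L (δ x) = - δ x) ∧
  (∀ x, TensorProduct.map δ LinearMap.id (δ x)
      + ξmap k L (TensorProduct.map δ LinearMap.id (δ x))
      + ξmap k L (ξmap k L (TensorProduct.map δ LinearMap.id (δ x))) = 0)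

/-- A Lie bialgebra: simultaneously a Lie algebra and a Lie coalgebra satisfying (LB):
`δ[x,y] = [x,y₁]⊗y₂ + y₁⊗[x,y₂] + x₁⊗[x₂,y] + [x₁,y]⊗x₂` (Sweedler notation). -/
def IsLieBialg {L : Type*} [AddCommGroup L] [Module k L]
    (br : L →ₗ[k] L →ₗ[k] L) (δ : L →ₗ[k] L ⊗[k] L) : Prop :=
  IsLieAlg br ∧ IsLieCoalg δ ∧
  ∀ x y, δ (br x y)
      = TensorProduct.map (br x) LinearMap.id (δ y)
      + TensorProduct.map LinearMap.id (br x) (δ y)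
      + TensorProduct.map LinearMap.id (br.flip y) (δ x)
      + TensorProduct.map (br.flip y) LinearMap.id (δ x)

/-- The bracket on the direct sum `A ⊕ H`:
`[(a,h),(b,g)] = ([a,b] + h▷b − g▷a + σ(h,g), [h,g] + h◁b − g◁a + θ(a,b))`. -/
def bbBracket (brA : A →ₗ[k] A →ₗ[k] A) (brH : H →ₗ[k] H →ₗ[k] H)
    (r : H →ₗ[k] A →ₗ[k] A) (l : H →ₗ[k] A →ₗ[k] H)
    (σ : H →ₗ[k] H →ₗ[k] A) (θ : A →ₗ[k] A →ₗ[k] H) :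
    (A × H) →ₗ[k] (A × H) →ₗ[k] (A × H) :=
  LinearMap.mk₂ k
    (fun x y => (brA x.1 y.1 + r x.2 y.1 - r y.2 x.1 + σ x.2 y.2,
                 brH x.2 y.2 + l x.2 y.1 - l y.2 x.1 + θ x.1 y.1))
    (fun x x' y => by
      simp only [Prod.fst_add, Prod.snd_add, map_add, LinearMap.add_apply, Prod.mk_add_mk,
        Prod.mk.injEq]
      all_goals try (constructor <;> abel))
    (fun c x y => by
      simp only [Prod.smul_fst, Prod.smul_snd, map_smul, LinearMap.smul_apply, Prod.smul_mk,
        Prod.mk.injEq, smul_add, smul_sub]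
      all_goals try (constructor <;> abel))
    (fun x y y' => by
      simp only [Prod.fst_add, Prod.snd_add, map_add, LinearMap.add_apply, Prod.mk_add_mk,
        Prod.mk.injEq]
      all_goals try (constructor <;> abel))
    (fun c x y => by
      simp only [Prod.smul_fst, Prod.smul_snd, map_smul, LinearMap.smul_apply, Prod.smul_mk,
        Prod.mk.injEq, smul_add, smul_sub]
      all_goals try (constructor <;> abel))

/-- The cobracket on the direct sum `A ⊕ H`:
`δ_D(a) = δ_A(a) + φ(a) − τφ(a) + P(a)` and `δ_D(h) = δ_H(h) + ψ(h) − τψ(h) + Q(h)`,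
all terms viewed inside `(A ⊕ H) ⊗ (A ⊕ H)`. -/
def bbCobracket (δA : A →ₗ[k] A ⊗[k] A) (δH : H →ₗ[k] H ⊗[k] H)
    (φ : A →ₗ[k] H ⊗[k] A) (ψ : H →ₗ[k] H ⊗[k] A)
    (P : A →ₗ[k] H ⊗[k] H) (Q : H →ₗ[k] A ⊗[k] A) :
    (A × H) →ₗ[k] (A × H) ⊗[k] (A × H) :=
  (TensorProduct.map (LinearMap.inl k A H) (LinearMap.inl k A H) ∘ₗ δA
    + TensorProduct.map (LinearMap.inr k A H) (LinearMap.inl k A H) ∘ₗ φ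
    - TensorProduct.map (LinearMap.inl k A H) (LinearMap.inr k A H)
        ∘ₗ (TensorProduct.comm k H A).toLinearMap ∘ₗ φ
    + TensorProduct.map (LinearMap.inr k A H) (LinearMap.inr k A H) ∘ₗ P) ∘ₗ LinearMap.fst k A H
  + (TensorProduct.map (LinearMap.inr k A H) (LinearMap.inr k A H) ∘ₗ δH
    + TensorProduct.map (LinearMap.inr k A H) (LinearMap.inl k A H) ∘ₗ ψ
    - TensorProduct.map (LinearMap.inl k A H) (LinearMap.inr k A H)
        ∘ₗ (TensorProduct.comm k H A).toLinearMap ∘ₗ ψ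
    + TensorProduct.map (LinearMap.inl k A H) (LinearMap.inl k A H) ∘ₗ Q) ∘ₗ LinearMap.snd k A H

/-- The right action `h ◁ a := ω(h₂, a) h₁` defined from a pairing `ω` and the cobracket of
`H` (Sweedler notation `δ_H h = h₁ ⊗ h₂`). -/
def pairingLact (δH : H →ₗ[k] H ⊗[k] H) (ω : H →ₗ[k] A →ₗ[k] k) : H →ₗ[k] A →ₗ[k] H :=
  LinearMap.mk₂ k
    (fun h a => TensorProduct.rid k H
      (TensorProduct.map LinearMap.id (ω.flip a) (δH h)))
    (fun h h' a => by simp [map_add])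
    (fun c h a => by simp [map_smul])
    (fun h a a' => by simp [map_add, TensorProduct.map_add_right])
    (fun c h a => by simp [map_smul, TensorProduct.map_smul_right])

/-- The left action `h ▷ a := ω(h, a₂) a₁` defined from a pairing `ω` and the cobracket of
`A` (Sweedler notation `δ_A a = a₁ ⊗ a₂`). -/
def pairingRact (δA : A →ₗ[k] A ⊗[k] A) (ω : H →ₗ[k] A →ₗ[k] k) : H →ₗ[k] A →ₗ[k] A :=
  LinearMap.mk₂ k
    (fun h a => TensorProduct.rid k A
      (TensorProduct.map LinearMap.id (ω h) (δA a)))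
    (fun h h' a => by simp [map_add, TensorProduct.map_add_right])
    (fun c h a => by simp [map_smul, TensorProduct.map_smul_right])
    (fun h a a' => by simp [map_add])
    (fun c h a => by simp [map_smul])
/-! The map `h ▷ ·` depends on `h` only through the functional `ω h ∈ A*`, and the first
skew-pairing axiom says that `ω : H → A*` carries `[h, g]` to the convolution bracket
`(ω h * ω g)(a) = ω(h, a₁) ω(g, a₂)`. So it suffices that a Lie coalgebra `A` is a left module
over the Lie algebra `A*` under `f ▷ a = f(a₂) a₁`. For this, contract the co-Jacobi identity
for `δ a` with `(x ⊗ y) ⊗ z ↦ g(z) f(y) x`: its three cyclic terms become `f ▷ (g ▷ a)`,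
`-g ▷ (f ▷ a)` and `-(f * g) ▷ a`, the two signs coming from coanticommutativity. -/

namespace LieCoalgebra

def contractRight (f : Module.Dual k A) : A ⊗[k] A →ₗ[k] A :=
  (TensorProduct.rid k A).toLinearMap ∘ₗ f.lTensor A

def contractLeft (f : Module.Dual k A) : A ⊗[k] A →ₗ[k] A :=
  (TensorProduct.lid k A).toLinearMap ∘ₗ f.rTensor A

def contractTwice (f g : Module.Dual k A) : (A ⊗[k] A) ⊗[k] A →ₗ[k] A :=
  contractRight g ∘ₗ (contractRight f).rTensor A

def dualAct (δ : A →ₗ[k] A ⊗[k] A) (f : Module.Dual k A) : A →ₗ[k] A :=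
  contractRight f ∘ₗ δ

def dualBracket (δ : A →ₗ[k] A ⊗[k] A) (f g : Module.Dual k A) : Module.Dual k A :=
  LinearMap.mul' k k ∘ₗ TensorProduct.map f g ∘ₗ δ

@[simp]
lemma contractRight_tmul (f : Module.Dual k A) (u v : A) :
    contractRight f (u ⊗ₜ v) = f v • u := by
  simp [contractRight]

@[simp]
lemma contractLeft_tmul (f : Module.Dual k A) (u v : A) :
    contractLeft f (u ⊗ₜ v) = f u • v := by
  simp [contractLeft]

@[simp]
lemma contractTwice_tmul (f g : Module.Dual k A) (x y z : A) :
    contractTwice f g ((x ⊗ₜ y) ⊗ₜ z) = g z • f y • x := by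
  simp [contractTwice]

lemma contractLeft_eq_neg_dualAct {δ : A →ₗ[k] A ⊗[k] A}
    (hδ : ∀ x, TensorProduct.comm k A A (δ x) = - δ x) (f : Module.Dual k A) (a : A) :
    contractLeft f (δ a) = - dualAct δ f a := by
  have hflip : contractLeft f = contractRight f ∘ₗ (TensorProduct.comm k A A).toLinearMap :=
    TensorProduct.ext' fun u v => by simp
  rw [hflip, LinearMap.comp_apply, LinearEquiv.coe_coe, hδ, map_neg]
  rfl

section CyclicTerms

variable (δ : A →ₗ[k] A ⊗[k] A) (f g : Module.Dual k A)

lemma contractTwice_comp_rTensor :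
    contractTwice f g ∘ₗ δ.rTensor A = dualAct δ f ∘ₗ contractRight g :=
  TensorProduct.ext' fun u z => by simp [contractTwice, dualAct]

lemma contractTwice_comp_ξmap_comp_rTensor :
    contractTwice f g ∘ₗ ξmap k A ∘ₗ δ.rTensor A = contractLeft g ∘ₗ δ ∘ₗ contractRight f := by
  refine TensorProduct.ext' fun u z => ?_
  simp only [LinearMap.comp_apply, LinearMap.rTensor_tmul, contractRight_tmul, map_smul]
  induction δ u using TensorProduct.induction_on with
  | zero => simp
  | tmul x y => simp [ξmap, smul_smul, mul_comm]
  | add s t hs ht => simp only [TensorProduct.add_tmul, map_add, hs, ht, smul_add]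

lemma contractTwice_comp_ξmap_comp_ξmap_comp_rTensor :
    contractTwice f g ∘ₗ ξmap k A ∘ₗ ξmap k A ∘ₗ δ.rTensor A
      = contractLeft (dualBracket δ f g) := by
  refine TensorProduct.ext' fun u z => ?_
  simp only [LinearMap.comp_apply, LinearMap.rTensor_tmul, contractLeft_tmul, dualBracket]
  induction δ u using TensorProduct.induction_on with
  | zero => simp
  | tmul x y => simp [ξmap, smul_smul, mul_comm]
  | add s t hs ht => simp only [TensorProduct.add_tmul, map_add, hs, ht, add_smul]

end CyclicTerms

theorem dualAct_dualBracket {δ : A →ₗ[k] A ⊗[k] A} (hδ : IsLieCoalg δ)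
    (f g : Module.Dual k A) (a : A) :
    dualAct δ (dualBracket δ f g) a
      = dualAct δ f (dualAct δ g a) - dualAct δ g (dualAct δ f a) := by
  set X := TensorProduct.map δ LinearMap.id (δ a)
  have hcoJacobi := congrArg (contractTwice f g) (hδ.2 a)
  have h₀ : contractTwice f g X = dualAct δ f (dualAct δ g a) :=
    LinearMap.congr_fun (contractTwice_comp_rTensor δ f g) (δ a)
  have h₁ : contractTwice f g (ξmap k A X) = - dualAct δ g (dualAct δ f a) := by
    rw [← contractLeft_eq_neg_dualAct hδ.1]
    exact LinearMap.congr_fun (contractTwice_comp_ξmap_comp_rTensor δ f g) (δ a)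
  have h₂ : contractTwice f g (ξmap k A (ξmap k A X)) = - dualAct δ (dualBracket δ f g) a := by
    rw [← contractLeft_eq_neg_dualAct hδ.1]
    exact LinearMap.congr_fun (contractTwice_comp_ξmap_comp_ξmap_comp_rTensor δ f g) (δ a)
  rw [map_add, map_add, map_zero, h₀, h₁, h₂] at hcoJacobi
  linear_combination (norm := abel) -hcoJacobi

end LieCoalgebra

open LieCoalgebra in
theorem skew_pairing_left_module_general
    (brA : A →ₗ[k] A →ₗ[k] A) (δA : A →ₗ[k] A ⊗[k] A)
    (brH : H →ₗ[k] H →ₗ[k] H)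
    (ω : H →ₗ[k] A →ₗ[k] k)
    (hA : IsLieBialg brA δA)
    -- `ω` is a skew-pairing:  `ω([h,g], a) = ω(h, a₁) ω(g, a₂)`
    (hω1 : ∀ h g a, ω (brH h g) a
        = LinearMap.mul' k k (TensorProduct.map (ω h) (ω g) (δA a))) :
    ∀ h g a, pairingRact δA ω (brH h g) a
      = pairingRact δA ω h (pairingRact δA ω g a)
      - pairingRact δA ω g (pairingRact δA ω h a) := by
  intro h g a
  have hbracket : ω (brH h g) = dualBracket δA (ω h) (ω g) := LinearMap.ext (hω1 h g)
  change dualAct δA (ω (brH h g)) a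
    = dualAct δA (ω h) (dualAct δA (ω g) a) - dualAct δA (ω g) (dualAct δA (ω h) a)
  rw [hbracket]
  exact dualAct_dualBracket hA.2.1 (ω h) (ω g) a

/-- For a skew-pairing `ω : H ⊗ A → k` between Lie bialgebras,
`h ▷ a := ω(h, a₂) a₁` makes `A` a left `H`-module. -/
theorem skew_pairing_left_module [CharZero k]
    (brA : A →ₗ[k] A →ₗ[k] A) (δA : A →ₗ[k] A ⊗[k] A)
    (brH : H →ₗ[k] H →ₗ[k] H) (δH : H →ₗ[k] H ⊗[k] H)
    (ω : H →ₗ[k] A →ₗ[k] k)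
    (hA : IsLieBialg brA δA) (hH : IsLieBialg brH δH)
    -- `ω` is a skew-pairing:  `ω([h,g], a) = ω(h, a₁) ω(g, a₂)`
    (hω1 : ∀ h g a, ω (brH h g) a
        = LinearMap.mul' k k (TensorProduct.map (ω h) (ω g) (δA a)))
    -- and `ω(h, [a,b]) = ω(h₁, b) ω(h₂, a)`
    (hω2 : ∀ h a b, ω h (brA a b)
        = LinearMap.mul' k k (TensorProduct.map (ω.flip b) (ω.flip a) (δH h))) :
    ∀ h g a, pairingRact δA ω (brH h g) a
      = pairingRact δA ω h (pairingRact δA ω g a)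
      - pairingRact δA ω g (pairingRact δA ω h a) :=
  skew_pairing_left_module_general brA δA brH ω hA hω1

end
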